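/- arXiv:2510.16312 — 5 statements merged into one kernel-verified Lean document; each statement's English description precedes it below -/
import Mathlib

section
/- Let C ≥ 2 be an integer and let p be a probability mass function on a finite state space with C elements, with maximal probability π = max_z p(z). Then the Shannon entropy of p satisfies H(p) ≤ S_F(π) = −π·log₂ π − (1−π)·log₂(1−π) + (1−π)·log₂(C−1). (Equivalently: replacing p by the flattened distribution that keeps the maximal probability π on one state and distributes the remaining mass 1−π uniformly over the other C−1 states can only increase the entropy.) -/
/-- The Fano function `S_F(p) = -p·log₂ p - (1-p)·log₂(1-p) + (1-p)·log₂(C-1)`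
(with the convention `0·log₂ 0 = 0`, which holds automatically since `Real.logb 2 0 = 0`). -/
noncomputable def fanoFn (C : ℕ) (p : ℝ) : ℝ :=
  -p * Real.logb 2 p - (1 - p) * Real.logb 2 (1 - p) + (1 - p) * Real.logb 2 ((C : ℝ) - 1)

/-- Maximum entropy of a subdistribution: if `q` is nonnegative on `s` with total mass `m > 0`,
then `-∑ q log q ≤ m * log (|s| / m)`. -/
lemma subdist_entropy_le {Z : Type*} (s : Finset Z) (q : Z → ℝ)
    (h0 : ∀ z ∈ s, 0 ≤ q z) (m : ℝ) (hm : 0 < m) (hsum : ∑ z ∈ s, q z = m) :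
    -∑ z ∈ s, q z * Real.log (q z) ≤ m * Real.log ((s.card : ℝ) / m) := by
  classical
  set s' : Finset Z := s.filter (fun z => q z ≠ 0) with hs'
  have hsub : s' ⊆ s := Finset.filter_subset _ _
  have hsum' : ∑ z ∈ s', q z = m := by
    rw [hs', Finset.sum_filter_ne_zero, hsum]
  have hpos : ∀ z ∈ s', 0 < q z := by
    intro z hz
    rw [hs', Finset.mem_filter] at hz
    exact lt_of_le_of_ne (h0 z hz.1) (Ne.symm hz.2)
  have hne : s'.Nonempty := by
    by_contra h
    rw [Finset.not_nonempty_iff_eq_empty] at h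
    rw [h, Finset.sum_empty] at hsum'
    exact hm.ne hsum'
  have hsumeq : ∑ z ∈ s, q z * Real.log (q z) = ∑ z ∈ s', q z * Real.log (q z) := by
    refine (Finset.sum_subset hsub ?_).symm
    intro z hz hz'
    have : q z = 0 := by
      by_contra h
      exact hz' (Finset.mem_filter.2 ⟨hz, h⟩)
    simp [this]
  -- Jensen
  have hjensen : ∑ z ∈ s', (q z / m) • Real.log ((q z)⁻¹) ≤
      Real.log (∑ z ∈ s', (q z / m) • (q z)⁻¹) := by
    apply strictConcaveOn_log_Ioi.concaveOn.le_map_sum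
    · intro z hz; exact div_nonneg (h0 z (hsub hz)) hm.le
    · rw [← Finset.sum_div, hsum', div_self hm.ne']
    · intro z hz; exact Set.mem_Ioi.2 (inv_pos.2 (hpos z hz))
  have hterm : ∑ z ∈ s', (q z / m) • (q z)⁻¹ = (s'.card : ℝ) / m := by
    have : ∀ z ∈ s', (q z / m) • (q z)⁻¹ = (1 : ℝ) / m := by
      intro z hz
      rw [smul_eq_mul, div_mul_eq_mul_div, mul_inv_cancel₀ (hpos z hz).ne']
    rw [Finset.sum_congr rfl this, Finset.sum_const, nsmul_eq_mul, mul_one_div]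
  rw [hterm] at hjensen
  have hmain : -∑ z ∈ s', q z * Real.log (q z) ≤ m * Real.log ((s'.card : ℝ) / m) := by
    have := mul_le_mul_of_nonneg_left hjensen hm.le
    calc -∑ z ∈ s', q z * Real.log (q z)
        = m * ∑ z ∈ s', (q z / m) • Real.log ((q z)⁻¹) := by
          rw [Finset.mul_sum, ← Finset.sum_neg_distrib]
          refine Finset.sum_congr rfl (fun z hz => ?_)
          rw [smul_eq_mul, Real.log_inv]
          field_simp
      _ ≤ m * Real.log ((s'.card : ℝ) / m) := this
  refine hmain.trans_eq' (by rw [hsumeq]) |>.trans ?_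
  apply mul_le_mul_of_nonneg_left _ hm.le
  apply Real.log_le_log (by positivity)
  apply div_le_div_of_nonneg_right _ hm.le
  exact_mod_cast Finset.card_le_card hsub

/-- For a pmf `p` on a finite state space with `C ≥ 2` elements, its Shannon
entropy (in bits) is bounded by the Fano function evaluated at the maximal probability
`π = max_z p z`: `H(p) ≤ S_F(π)`. -/
theorem stmt_2 {Z : Type*} [Fintype Z] [Nonempty Z]
    (C : ℕ) (hC : 2 ≤ C) (hcard : Fintype.card Z = C)
    (p : Z → ℝ) (hp0 : ∀ z, 0 ≤ p z) (hp1 : ∑ z, p z = 1) :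
    -∑ z, p z * Real.logb 2 (p z) ≤ fanoFn C (Finset.univ.sup' Finset.univ_nonempty p) := by
  classical
  obtain ⟨z₀, -, hz₀⟩ := Finset.exists_mem_eq_sup' Finset.univ_nonempty p
  set π : ℝ := p z₀ with hπdef
  rw [hz₀]
  have hπ1 : π ≤ 1 := by
    rw [← hp1]
    exact Finset.single_le_sum (fun z _ => hp0 z) (Finset.mem_univ z₀)
  have hsplit : ∑ z ∈ (Finset.univ.erase z₀), p z = 1 - π := by
    have := Finset.add_sum_erase Finset.univ p (Finset.mem_univ z₀)
    rw [hp1] at this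
    linarith
  have hlog2 : (0:ℝ) < Real.log 2 := Real.log_pos (by norm_num)
  -- reduce to the natural-log statement
  have hkey : -∑ z, p z * Real.log (p z) ≤
      -π * Real.log π - (1 - π) * Real.log (1 - π) + (1 - π) * Real.log ((C : ℝ) - 1) := by
    rcases eq_or_lt_of_le hπ1 with h1 | h1
    · -- π = 1: all other masses vanish
      have hz : ∀ z ∈ Finset.univ.erase z₀, p z = 0 := by
        have h0 : ∑ z ∈ (Finset.univ.erase z₀), p z = 0 := by rw [hsplit, ← h1]; ring
        intro z hz
        exact (Finset.sum_eq_zero_iff_of_nonneg (fun w _ => hp0 w)).1 h0 z hz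
      have : ∑ z, p z * Real.log (p z) = π * Real.log π := by
        rw [← Finset.add_sum_erase Finset.univ (fun z => p z * Real.log (p z))
          (Finset.mem_univ z₀), Finset.sum_eq_zero (fun z hzz => by rw [hz z hzz]; ring)]
        ring
      rw [this, ← h1]
      simp
    · -- π < 1
      have hm : 0 < 1 - π := by linarith
      have hb : -∑ z ∈ (Finset.univ.erase z₀), p z * Real.log (p z) ≤
          (1 - π) * Real.log (((Finset.univ.erase z₀).card : ℝ) / (1 - π)) :=
        subdist_entropy_le _ p (fun z _ => hp0 z) _ hm hsplit
      have hcard' : ((Finset.univ.erase z₀).card : ℝ) = (C : ℝ) - 1 := by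
        rw [Finset.card_erase_of_mem (Finset.mem_univ z₀), Finset.card_univ, hcard]
        have : (1:ℕ) ≤ C := by omega
        push_cast [Nat.cast_sub this]
        ring
      have hC1 : (0:ℝ) < (C : ℝ) - 1 := by
        have : (2:ℝ) ≤ (C:ℝ) := by exact_mod_cast hC
        linarith
      rw [hcard', Real.log_div hC1.ne' hm.ne'] at hb
      have hsum2 : ∑ z, p z * Real.log (p z) =
          π * Real.log π + ∑ z ∈ (Finset.univ.erase z₀), p z * Real.log (p z) := by
        rw [← Finset.add_sum_erase Finset.univ (fun z => p z * Real.log (p z))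
          (Finset.mem_univ z₀)]
      rw [hsum2]
      nlinarith [hb]
  -- convert natural log to logb
  have hL : -∑ z, p z * Real.logb 2 (p z) = (-∑ z, p z * Real.log (p z)) / Real.log 2 := by
    rw [neg_div, Finset.sum_div]
    congr 1
    refine Finset.sum_congr rfl (fun z _ => ?_)
    rw [Real.logb, mul_div_assoc]
  have hR : fanoFn C π =
      (-π * Real.log π - (1 - π) * Real.log (1 - π) + (1 - π) * Real.log ((C : ℝ) - 1)) /
        Real.log 2 := by
    unfold fanoFn
    rw [Real.logb, Real.logb, Real.logb]
    field_simp
  rw [hL, hR]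
  exact div_le_div_of_nonneg_right hkey hlog2.le
end

section
/- Let C ≥ 2 be an integer, let H be a finite nonempty index set (of histories), let w : H → ℝ be nonnegative weights with Σ_{h∈H} w(h) = 1, and for each h ∈ H let p_h be a probability mass function on a finite state space with C elements. Then the weighted average entropy is bounded by the Fano function evaluated at the weighted average predictability: Σ_{h∈H} w(h)·H(p_h) ≤ S_F(Σ_{h∈H} w(h)·max_z p_h(z)). -/
open Real in
/-- Maximum-entropy bound: the entropy of a nonnegative vector on `t` is at most
`negMulLog s + s * log |t|` where `s` is its total mass. -/
lemma sum_negMulLog_le_aux {Z : Type*} (t : Finset Z) (q : Z → ℝ)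
    (hq : ∀ z ∈ t, 0 ≤ q z) :
    ∑ z ∈ t, Real.negMulLog (q z) ≤
      Real.negMulLog (∑ z ∈ t, q z) + (∑ z ∈ t, q z) * Real.log t.card := by
  rcases Finset.eq_empty_or_nonempty t with rfl | ht
  · simp
  set s : ℝ := ∑ z ∈ t, q z with hs
  have hs0 : 0 ≤ s := Finset.sum_nonneg hq
  rcases eq_or_lt_of_le hs0 with hs0' | hs0'
  · have hz : ∀ z ∈ t, q z = 0 :=
      (Finset.sum_eq_zero_iff_of_nonneg hq).1 hs0'.symm
    have : ∑ z ∈ t, Real.negMulLog (q z) = 0 := by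
      apply Finset.sum_eq_zero
      intro z hzt; rw [hz z hzt]; simp
    rw [this, ← hs0']; simp
  have hn : (0:ℝ) < t.card := by exact_mod_cast Finset.card_pos.2 ht
  have hwsum : ∑ _z ∈ t, ((t.card : ℝ))⁻¹ = 1 := by
    rw [Finset.sum_const, nsmul_eq_mul]
    field_simp
  have hjensen := Real.concaveOn_negMulLog.le_map_sum
    (t := t) (w := fun _ => ((t.card : ℝ))⁻¹) (p := q)
    (fun z _ => by positivity) hwsum (fun z hz => hq z hz)
  simp only [smul_eq_mul, ← Finset.mul_sum] at hjensen
  have hj2 : (t.card : ℝ) * ((t.card : ℝ)⁻¹ * ∑ z ∈ t, Real.negMulLog (q z)) ≤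
      (t.card : ℝ) * Real.negMulLog ((t.card : ℝ)⁻¹ * s) :=
    mul_le_mul_of_nonneg_left hjensen hn.le
  rw [← mul_assoc, mul_inv_cancel₀ hn.ne', one_mul] at hj2
  calc ∑ z ∈ t, Real.negMulLog (q z)
      ≤ (t.card : ℝ) * Real.negMulLog ((t.card : ℝ)⁻¹ * s) := hj2
    _ = Real.negMulLog s + s * Real.log t.card := by
        rw [Real.negMulLog, Real.log_mul (by positivity) hs0'.ne', Real.log_inv,
          Real.negMulLog]
        field_simp
        ring

open Real in
/-- Pointwise Fano bound (in nats): if `p` is a pmf on a `C`-element type and `p z0 = π`,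
then the entropy of `p` is at most `qaryEntropy C (1 - π)`. -/
lemma entropy_le_qary {Z : Type*} [Fintype Z] (C : ℕ) (hC : 2 ≤ C)
    (hcard : Fintype.card Z = C) (q : Z → ℝ) (hq0 : ∀ z, 0 ≤ q z)
    (hq1 : ∑ z, q z = 1) (z0 : Z) :
    ∑ z, Real.negMulLog (q z) ≤ Real.qaryEntropy C (1 - q z0) := by
  classical
  have hmem : z0 ∈ (Finset.univ : Finset Z) := Finset.mem_univ _
  have hsplit : ∑ z, Real.negMulLog (q z) =
      Real.negMulLog (q z0) + ∑ z ∈ Finset.univ.erase z0, Real.negMulLog (q z) :=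
    (Finset.add_sum_erase _ _ hmem).symm
  have hssplit : q z0 + ∑ z ∈ Finset.univ.erase z0, q z = 1 := by
    rw [Finset.add_sum_erase _ _ hmem, hq1]
  have hrest : ∑ z ∈ Finset.univ.erase z0, q z = 1 - q z0 := by linarith
  have hcard' : ((Finset.univ.erase z0).card : ℝ) = (C : ℝ) - 1 := by
    rw [Finset.card_erase_of_mem hmem, Finset.card_univ, hcard]
    have : 1 ≤ C := by omega
    push_cast [Nat.cast_sub this]
    ring
  have hbound := sum_negMulLog_le_aux (Finset.univ.erase z0) q (fun z _ => hq0 z)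
  rw [hrest, hcard'] at hbound
  rw [hsplit]
  have hqE : Real.qaryEntropy C (1 - q z0) =
      (1 - q z0) * Real.log ((C:ℝ) - 1) +
        (Real.negMulLog (1 - q z0) + Real.negMulLog (q z0)) := by
    rw [Real.qaryEntropy, Real.binEntropy_eq_negMulLog_add_negMulLog_one_sub]
    push_cast
    ring_nf
  rw [hqE]
  linarith
open Real in
lemma fanoFn_eq (C : ℕ) (x : ℝ) :
    fanoFn C x = Real.qaryEntropy C (1 - x) / Real.log 2 := by
  rw [fanoFn, Real.qaryEntropy, Real.binEntropy]
  simp only [Real.logb, Real.log_inv]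
  push_cast
  ring

open Real in
lemma concave_g (C : ℕ) : ConcaveOn ℝ (Set.Icc (0:ℝ) 1)
    (fun x => Real.qaryEntropy C (1 - x)) := by
  have h := (Real.strictConcaveOn_qaryEntropy (q := C)).concaveOn
  constructor
  · exact convex_Icc 0 1
  · intro x hx y hy a b ha hb hab
    have hx' : 1 - x ∈ Set.Icc (0:ℝ) 1 := by
      constructor <;> [linarith [hx.2]; linarith [hx.1]]
    have hy' : 1 - y ∈ Set.Icc (0:ℝ) 1 := by
      constructor <;> [linarith [hy.2]; linarith [hy.1]]
    have := h.2 hx' hy' ha hb hab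
    simp only [smul_eq_mul] at this ⊢
    have heq : a * (1 - x) + b * (1 - y) = 1 - (a * x + b * y) := by
      nlinarith [hab]
    rw [heq] at this
    exact this

/-- Let `w` be nonnegative weights summing to `1` over a finite nonempty
index set `H` of histories, and for each `h` let `p h` be a pmf on a finite state space with
`C ≥ 2` elements. Then the weighted average Shannon entropy is bounded by the Fano function
evaluated at the weighted average predictability:
`∑ h, w h · H(p h) ≤ S_F(∑ h, w h · max_z p h z)`. -/
theorem stmt_5 {H Z : Type*} [Fintype H] [Nonempty H] [Fintype Z] [Nonempty Z]
    (C : ℕ) (hC : 2 ≤ C) (hcard : Fintype.card Z = C)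
    (w : H → ℝ) (hw0 : ∀ h, 0 ≤ w h) (hw1 : ∑ h, w h = 1)
    (p : H → Z → ℝ) (hp0 : ∀ h z, 0 ≤ p h z) (hp1 : ∀ h, ∑ z, p h z = 1) :
    ∑ h, w h * (-∑ z, p h z * Real.logb 2 (p h z)) ≤
      fanoFn C (∑ h, w h * Finset.univ.sup' Finset.univ_nonempty (p h)) := by
  classical
  have hlog2 : (0:ℝ) < Real.log 2 := Real.log_pos (by norm_num)
  set π : H → ℝ := fun h => Finset.univ.sup' Finset.univ_nonempty (p h) with hπ
  have hπmem : ∀ h, π h ∈ Set.Icc (0:ℝ) 1 := by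
    intro h
    constructor
    · exact (hp0 h (Classical.arbitrary Z)).trans
        (Finset.le_sup' (p h) (Finset.mem_univ _))
    · apply Finset.sup'_le
      intro z _
      calc p h z = ∑ z', p h z' - ∑ z' ∈ Finset.univ.erase z, p h z' := by
            rw [← Finset.add_sum_erase _ _ (Finset.mem_univ z)]; ring
        _ ≤ 1 := by
            rw [hp1 h]
            have : 0 ≤ ∑ z' ∈ Finset.univ.erase z, p h z' :=
              Finset.sum_nonneg fun z' _ => hp0 h z'
            linarith
  -- per-history bound
  have hpoint : ∀ h, (-∑ z, p h z * Real.logb 2 (p h z)) ≤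
      Real.qaryEntropy C (1 - π h) / Real.log 2 := by
    intro h
    obtain ⟨z0, _, hz0⟩ := Finset.exists_mem_eq_sup' Finset.univ_nonempty (p h)
    have hE := entropy_le_qary C hC hcard (p h) (hp0 h) (hp1 h) z0
    rw [← hz0] at hE
    have hLHS : (-∑ z, p h z * Real.logb 2 (p h z)) =
        (∑ z, Real.negMulLog (p h z)) / Real.log 2 := by
      rw [Finset.sum_div, ← Finset.sum_neg_distrib]
      apply Finset.sum_congr rfl
      intro z _
      rw [Real.negMulLog, Real.logb]
      field_simp
    rw [hLHS]
    exact div_le_div_of_nonneg_right hE hlog2.le |>.trans_eq rfl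
  -- Jensen step
  have hjensen : ∑ h, w h * (Real.qaryEntropy C (1 - π h)) ≤
      Real.qaryEntropy C (1 - ∑ h, w h * π h) := by
    have := (concave_g C).le_map_sum (t := Finset.univ) (w := w) (p := π)
      (fun h _ => hw0 h) hw1 (fun h _ => hπmem h)
    simpa using this
  rw [fanoFn_eq]
  calc ∑ h, w h * (-∑ z, p h z * Real.logb 2 (p h z))
      ≤ ∑ h, w h * (Real.qaryEntropy C (1 - π h) / Real.log 2) := by
        apply Finset.sum_le_sum
        intro h _
        exact mul_le_mul_of_nonneg_left (hpoint h) (hw0 h)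
    _ = (∑ h, w h * Real.qaryEntropy C (1 - π h)) / Real.log 2 := by
        rw [Finset.sum_div]
        apply Finset.sum_congr rfl
        intro h _; ring
    _ ≤ Real.qaryEntropy C (1 - ∑ h, w h * π h) / Real.log 2 :=
        div_le_div_of_nonneg_right hjensen hlog2.le
end

section
/- For every integer C ≥ 2 and every real number S with 0 ≤ S ≤ log₂ C, there exists exactly one Π ∈ [1/C, 1] such that S_F(Π) = S. (In particular S_F(1/C) = log₂ C and S_F(1) = 0, so the Fano equation S = S_F(Π^max) has a unique solution Π^max in this range.) -/
open Real Set

theorem StrictAntiOn.existsUnique_eq_of_continuousOn {α δ : Type*}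
    [ConditionallyCompleteLinearOrder α] [TopologicalSpace α] [OrderTopology α] [DenselyOrdered α]
    [LinearOrder δ] [TopologicalSpace δ] [OrderClosedTopology δ] {f : α → δ} {a b : α} {y : δ}
    (hab : a ≤ b) (hf : StrictAntiOn f (Icc a b)) (hfc : ContinuousOn f (Icc a b))
    (hy : y ∈ Icc (f b) (f a)) :
    ∃! x, x ∈ Icc a b ∧ f x = y := by
  obtain ⟨x, hx, hfx⟩ := intermediate_value_Icc' hab hfc hy
  exact ⟨x, ⟨hx, hfx⟩, fun x' ⟨hx', hfx'⟩ => hf.injOn hx' hx (hfx'.trans hfx.symm)⟩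

lemma Real.qaryEntropy_one_sub_inv (q : ℕ) : qaryEntropy q (1 - 1 / q) = log q := by
  obtain hq | hq := le_or_gt q 1
  · interval_cases q <;> simp
  have hq : (1 : ℝ) < q := by exact_mod_cast hq
  have h_sub : (1 : ℝ) - (1 - 1 / q) = 1 / q := by ring
  have h_div : (1 : ℝ) - 1 / q = (q - 1) / q := by field_simp
  rw [qaryEntropy, binEntropy, h_sub, h_div, log_inv, log_inv, one_div, log_inv,
    log_div (by linarith) (by linarith)]
  push_cast
  field_simp
  ring

lemma fanoFn_eq_qaryEntropy (C : ℕ) (p : ℝ) : fanoFn C p = qaryEntropy C (1 - p) / log 2 := by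
  rw [qaryEntropy, binEntropy_one_sub, binEntropy, fanoFn]
  simp only [logb, log_inv, Int.cast_sub, Int.cast_natCast, Int.cast_one]
  ring

lemma continuous_fanoFn (C : ℕ) : Continuous (fanoFn C) := by
  simp only [funext (fanoFn_eq_qaryEntropy C)]
  fun_prop

lemma fanoFn_strictAntiOn {C : ℕ} (hC : 2 ≤ C) :
    StrictAntiOn (fanoFn C) (Icc (1 / (C : ℝ)) 1) := by
  intro x hx y hy hxy
  have h_mem {p : ℝ} (hp : p ∈ Icc (1 / (C : ℝ)) 1) : 1 - p ∈ Icc 0 (1 - 1 / (C : ℝ)) :=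
    ⟨by linarith [hp.2], by linarith [hp.1]⟩
  simp only [fanoFn_eq_qaryEntropy]
  gcongr ?_ / _
  exact qaryEntropy_strictMonoOn hC (h_mem hy) (h_mem hx) (by linarith)

/-- For every integer `C ≥ 2` one has `S_F(1/C) = log₂ C` and `S_F(1) = 0`,
and for every real `S` with `0 ≤ S ≤ log₂ C` there exists exactly one `Π ∈ [1/C, 1]` with
`S_F(Π) = S`: the Fano equation has a unique solution in this range. -/
theorem stmt_7 (C : ℕ) (hC : 2 ≤ C) :
    fanoFn C (1 / (C : ℝ)) = Real.logb 2 C ∧ fanoFn C 1 = 0 ∧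
    ∀ S : ℝ, 0 ≤ S → S ≤ Real.logb 2 C →
      ∃! P : ℝ, P ∈ Set.Icc (1 / (C : ℝ)) 1 ∧ fanoFn C P = S := by
  have h_le : 1 / (C : ℝ) ≤ 1 :=
    div_le_one_of_le₀ (by exact_mod_cast (by omega : 1 ≤ C)) C.cast_nonneg
  have h_left : fanoFn C (1 / C) = logb 2 C := by
    rw [fanoFn_eq_qaryEntropy, qaryEntropy_one_sub_inv, logb]
  have h_right : fanoFn C 1 = 0 := by simp [fanoFn_eq_qaryEntropy]
  refine ⟨h_left, h_right, fun S hS₀ hS₁ => ?_⟩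
  exact (fanoFn_strictAntiOn hC).existsUnique_eq_of_continuousOn h_le
    (continuous_fanoFn C).continuousOn ⟨h_right ▸ hS₀, h_left ▸ hS₁⟩
end

section
/- Let G be a finite simple graph with N vertices and M edges, let A be its adjacency matrix over ℝ (a real symmetric matrix), and let λ_1, …, λ_N be the eigenvalues of A counted with multiplicity. Then the graph energy satisfies the McClelland bound E(G) = Σ_{i=1}^{N} |λ_i| ≤ √(2·M·N). -/
/-!
The trace of `A²` is `∑ deg v = 2M` on the diagonal and `∑ λᵢ²` in an eigenbasis, so
Cauchy–Schwarz gives `(∑ |λᵢ|)² ≤ N ∑ λᵢ² = 2MN`.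
-/

open Finset Matrix

namespace Matrix.IsHermitian

variable {𝕜 n : Type*} [RCLike 𝕜] [Fintype n] [DecidableEq n] {A : Matrix n n 𝕜}

lemma trace_cfc (hA : A.IsHermitian) (f : ℝ → ℝ) :
    (cfc f A).trace = ∑ i, (f (hA.eigenvalues i) : 𝕜) := by
  rw [hA.cfc_eq, IsHermitian.cfc, Unitary.conjStarAlgAut_apply, trace_mul_cycle,
    Unitary.coe_star_mul_self, Matrix.one_mul, trace_diagonal]
  rfl

lemma trace_mul_self (hA : A.IsHermitian) :
    (A * A).trace = ∑ i, (hA.eigenvalues i : 𝕜) ^ 2 := by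
  rw [← sq, ← cfc_pow_id (R := ℝ) A 2 hA.isSelfAdjoint, hA.trace_cfc]
  push_cast
  rfl

end Matrix.IsHermitian

lemma SimpleGraph.trace_adjMatrix_mul_self {V α : Type*} [Fintype V] [DecidableEq V]
    (G : SimpleGraph V) [DecidableRel G.Adj] [NonAssocSemiring α] :
    (G.adjMatrix α * G.adjMatrix α).trace = 2 * #G.edgeFinset := by
  simp only [trace, diag_apply, G.adjMatrix_mul_self_apply_self]
  rw [← Nat.cast_sum, G.sum_degrees_eq_twice_card_edges, Nat.cast_mul, Nat.cast_ofNat]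

lemma Finset.sum_abs_le_sqrt_card_mul_sum_sq {ι : Type*} (s : Finset ι) (f : ι → ℝ) :
    ∑ i ∈ s, |f i| ≤ √(#s * ∑ i ∈ s, f i ^ 2) := by
  refine Real.le_sqrt_of_sq_le ?_
  simpa only [sq_abs] using sq_sum_le_card_mul_sum_sq (s := s) (f := fun i => |f i|)

/-- **McClelland bound.** For a finite simple graph `G` with `N` vertices and
`M` edges, with real symmetric adjacency matrix `A` and eigenvalues `λ₁, …, λ_N` (counted
with multiplicity), the graph energy satisfies `E(G) = ∑ i, |λ i| ≤ √(2·M·N)`. -/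
theorem stmt_13 {V : Type*} [Fintype V] [DecidableEq V]
    (G : SimpleGraph V) [DecidableRel G.Adj]
    (hA : (G.adjMatrix ℝ).IsHermitian) :
    ∑ i, |hA.eigenvalues i| ≤
      Real.sqrt (2 * (G.edgeFinset.card : ℝ) * (Fintype.card V : ℝ)) := by
  have hsum : ∑ i, hA.eigenvalues i ^ 2 = 2 * #G.edgeFinset := by
    have h := G.trace_adjMatrix_mul_self (α := ℝ)
    rwa [hA.trace_mul_self] at h
  calc ∑ i, |hA.eigenvalues i| ≤ √(#univ * ∑ i, hA.eigenvalues i ^ 2) :=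
        sum_abs_le_sqrt_card_mul_sum_sq _ _
    _ = √(2 * #G.edgeFinset * Fintype.card V) := by rw [hsum, card_univ, mul_comm]
end

section
/- Let n and r be positive integers, let L : ℝ → (n×n real matrices) be continuous in t (the time-dependent linearized operator of a dynamical system), and let q_1, …, q_r : ℝ → ℝ^n be differentiable curves satisfying the optimally time-dependent (OTD) evolution equations q_i'(t) = L(t)·q_i(t) − Σ_{j=1}^{r} ⟨L(t)·q_i(t), q_j(t)⟩ · q_j(t) for all t ∈ ℝ and all i, where ⟨·,·⟩ is the standard Euclidean inner product on ℝ^n. If the initial vectors are orthonormal, i.e., ⟨q_i(0), q_j(0)⟩ = δ_ij for all i, j, then the vectors remain orthonormal for all time: ⟨q_i(t), q_j(t)⟩ = δ_ij for every t ∈ ℝ and all i, j. -/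
/-!
The Gram matrix `G = (⟨qᵢ, qⱼ⟩)` of an OTD basis obeys the matrix ODE
`G' = C + Cᵀ - C G - G Cᵀ` with `C = (⟨L qᵢ, qⱼ⟩)`, so `G - 1` solves the linear equation
`X' = -(C X + X Cᵀ)`, whose coefficients are continuous in `t`. Linear ODEs with continuous
coefficients have unique solutions, and `G(0) - 1 = 0`, hence `G - 1` vanishes identically.
-/

open Matrix Set

theorem ODE_linear_solution_eq_zero {E : Type*} [NormedAddCommGroup E] [NormedSpace ℝ E]
    {A : ℝ → E →L[ℝ] E} (hA : Continuous A) {x : ℝ → E}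
    (hx : ∀ t, HasDerivAt x (A t (x t)) t) {t₀ : ℝ} (h₀ : x t₀ = 0) (t : ℝ) : x t = 0 := by
  set d := |t - t₀| + 1
  obtain ⟨C, hC⟩ := (isCompact_Icc (a := t₀ - d) (b := t₀ + d)).exists_bound_of_continuousOn
    hA.continuousOn
  have hlip (s) (hs : s ∈ Ioo (t₀ - d) (t₀ + d)) : LipschitzOnWith C.toNNReal (A s) univ := by
    refine ((A s).lipschitz.weaken ?_).lipschitzOnWith
    rw [← NNReal.coe_le_coe, Real.coe_toNNReal', coe_nnnorm]
    exact (hC s (Ioo_subset_Icc_self hs)).trans (le_max_left _ _)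
  have hzero (s : ℝ) : HasDerivAt (fun _ ↦ (0 : E)) (A s 0) s := by
    simpa using hasDerivAt_const s (0 : E)
  refine ODE_solution_unique_of_mem_Ioo hlip (t₀ := t₀) (g := fun _ ↦ 0) ?_
    (fun s _ ↦ ⟨hx s, mem_univ _⟩) (fun s _ ↦ ⟨hzero s, mem_univ _⟩) h₀ ?_
  all_goals constructor <;> linarith [le_abs_self (t - t₀), neg_abs_le (t - t₀)]

theorem HasDerivAt.dotProduct {𝕜 ι : Type*} [NontriviallyNormedField 𝕜] [Fintype ι]
    {u v : 𝕜 → ι → 𝕜} {u' v' : ι → 𝕜} {t : 𝕜}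
    (hu : HasDerivAt u u' t) (hv : HasDerivAt v v' t) :
    HasDerivAt (fun s ↦ u s ⬝ᵥ v s) (u' ⬝ᵥ v t + u t ⬝ᵥ v') t := by
  simp only [_root_.dotProduct, ← Finset.sum_add_distrib]
  exact HasDerivAt.fun_sum fun k _ ↦ (hasDerivAt_pi.1 hu k).mul (hasDerivAt_pi.1 hv k)

section Lyapunov

variable {ι : Type*} [Fintype ι]

noncomputable def lyapunovCLM (c : Matrix ι ι ℝ) : Matrix ι ι ℝ →L[ℝ] Matrix ι ι ℝ :=
  LinearMap.toContinuousLinearMap (LinearMap.mulLeft ℝ c + LinearMap.mulRight ℝ cᵀ)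

theorem lyapunovCLM_apply (c X : Matrix ι ι ℝ) : lyapunovCLM c X = c * X + X * cᵀ := rfl

attribute [local instance] Matrix.normedAddCommGroup Matrix.normedSpace in
theorem Continuous.lyapunovCLM {X : Type*} [TopologicalSpace X] {c : X → Matrix ι ι ℝ}
    (hc : Continuous c) : Continuous fun x ↦ _root_.lyapunovCLM (c x) :=
  continuous_clm_apply.2 fun _ ↦
    (hc.matrix_mul continuous_const).add (continuous_const.matrix_mul hc.matrix_transpose)

end Lyapunov

section OTD

variable {ι m : Type*} [Fintype m]

def dotGram (v : ι → m → ℝ) : Matrix ι ι ℝ := of fun i j ↦ v i ⬝ᵥ v j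

def otdCoeff (A : Matrix m m ℝ) (v : ι → m → ℝ) : Matrix ι ι ℝ := of fun i j ↦ (A *ᵥ v i) ⬝ᵥ v j

theorem continuous_otdCoeff {L : ℝ → Matrix m m ℝ} (hL : Continuous L) {q : ι → ℝ → m → ℝ}
    (hq : ∀ i, Continuous (q i)) : Continuous fun t ↦ otdCoeff (L t) (q · t) :=
  continuous_matrix fun i j ↦ (hL.matrix_mulVec (hq i)).dotProduct (hq j)

variable [Fintype ι]

def otdField (A : Matrix m m ℝ) (v : ι → m → ℝ) (i : ι) : m → ℝ :=
  A *ᵥ v i - ∑ j, otdCoeff A v i j • v j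

theorem otdField_dotProduct (A : Matrix m m ℝ) (v : ι → m → ℝ) (i j : ι) :
    otdField A v i ⬝ᵥ v j = otdCoeff A v i j - (otdCoeff A v * dotGram v) i j := by
  simp [otdField, sub_dotProduct, sum_dotProduct, smul_dotProduct, mul_apply, otdCoeff, dotGram]

theorem otdField_dotProduct_add (A : Matrix m m ℝ) (v : ι → m → ℝ) (i j : ι) :
    otdField A v i ⬝ᵥ v j + v i ⬝ᵥ otdField A v j =
      (otdCoeff A v + (otdCoeff A v)ᵀ - otdCoeff A v * dotGram v -
        dotGram v * (otdCoeff A v)ᵀ) i j := by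
  rw [dotProduct_comm (v i), otdField_dotProduct, otdField_dotProduct]
  have hsymm (k : ι) : dotGram v k i * otdCoeff A v j k = dotGram v i k * otdCoeff A v j k := by
    rw [dotGram, of_apply, of_apply, dotProduct_comm]
  simp only [Matrix.sub_apply, Matrix.add_apply, transpose_apply, mul_apply,
    mul_comm (otdCoeff A v j _), hsymm]
  ring

attribute [local instance] Matrix.normedAddCommGroup Matrix.normedSpace

theorem hasDerivAt_dotGram_of_otd {A : Matrix m m ℝ} {q : ι → ℝ → m → ℝ} {t : ℝ}
    (hq : ∀ i, HasDerivAt (q i) (otdField A (q · t) i) t) :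
    HasDerivAt (fun s ↦ dotGram (q · s))
      (otdCoeff A (q · t) + (otdCoeff A (q · t))ᵀ - otdCoeff A (q · t) * dotGram (q · t) -
        dotGram (q · t) * (otdCoeff A (q · t))ᵀ) t :=
  hasDerivAt_pi.2 fun i ↦ hasDerivAt_pi.2 fun j ↦
    ((hq i).dotProduct (hq j)).congr_deriv (otdField_dotProduct_add A (q · t) i j)

theorem hasDerivAt_dotGram_sub_one_of_otd [DecidableEq ι] {A : Matrix m m ℝ}
    {q : ι → ℝ → m → ℝ} {t : ℝ} (hq : ∀ i, HasDerivAt (q i) (otdField A (q · t) i) t) :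
    HasDerivAt (fun s ↦ dotGram (q · s) - 1)
      (-lyapunovCLM (otdCoeff A (q · t)) (dotGram (q · t) - 1)) t :=
  ((hasDerivAt_dotGram_of_otd hq).sub_const 1).congr_deriv <| by
    rw [lyapunovCLM_apply, mul_sub, sub_mul, mul_one, one_mul]
    abel

theorem dotGram_eq_one_of_otd [DecidableEq ι] {L : ℝ → Matrix m m ℝ} (hL : Continuous L)
    {q : ι → ℝ → m → ℝ} (hq : ∀ i t, HasDerivAt (q i) (otdField (L t) (q · t) i) t)
    (h₀ : dotGram (q · 0) = 1) (t : ℝ) : dotGram (q · t) = 1 := by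
  have hqc (i : ι) : Continuous (q i) :=
    continuous_iff_continuousAt.2 fun t ↦ (hq i t).continuousAt
  exact sub_eq_zero.1 <| ODE_linear_solution_eq_zero
    (continuous_otdCoeff hL hqc).lyapunovCLM.neg
    (fun t ↦ hasDerivAt_dotGram_sub_one_of_otd (hq · t)) (sub_eq_zero.2 h₀) t

end OTD

theorem stmt_16_general (n r : ℕ)
    (L : ℝ → Matrix (Fin n) (Fin n) ℝ) (hL : Continuous L)
    (q : Fin r → ℝ → (Fin n → ℝ))
    (hq : ∀ i t, HasDerivAt (q i)
      ((L t).mulVec (q i t) -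
        ∑ j, (∑ k, (L t).mulVec (q i t) k * q j t k) • q j t) t)
    (h0 : ∀ i j, ∑ k, q i 0 k * q j 0 k = if i = j then (1 : ℝ) else 0) :
    ∀ t : ℝ, ∀ i j, ∑ k, q i t k * q j t k = if i = j then (1 : ℝ) else 0 := by
  intro t i j
  have hgram := dotGram_eq_one_of_otd hL hq (ext fun a b ↦ (h0 a b).trans Matrix.one_apply.symm) t
  exact (congr_fun₂ hgram i j).trans Matrix.one_apply

/-- Let `L : ℝ → Matrix (Fin n) (Fin n) ℝ` be continuous, and let
`q₁, …, q_r : ℝ → ℝⁿ` be differentiable curves satisfying the OTD evolution equations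
`qᵢ' = L qᵢ - ∑ⱼ ⟨L qᵢ, qⱼ⟩ qⱼ` (Euclidean inner product `⟨u,v⟩ = ∑ k, u k * v k`).
If the initial vectors are orthonormal, they remain orthonormal for all time. -/
theorem stmt_16 (n r : ℕ) (hn : 0 < n) (hr : 0 < r)
    (L : ℝ → Matrix (Fin n) (Fin n) ℝ) (hL : Continuous L)
    (q : Fin r → ℝ → (Fin n → ℝ))
    (hq : ∀ i t, HasDerivAt (q i)
      ((L t).mulVec (q i t) -
        ∑ j, (∑ k, (L t).mulVec (q i t) k * q j t k) • q j t) t)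
    (h0 : ∀ i j, ∑ k, q i 0 k * q j 0 k = if i = j then (1 : ℝ) else 0) :
    ∀ t : ℝ, ∀ i j, ∑ k, q i t k * q j t k = if i = j then (1 : ℝ) else 0 :=
  stmt_16_general n r L hL q hq h0
end
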